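/- (No circular negative-energy orbits for Kerr–Newman) Let M > 0, a > 0, Q be real numbers with a² + Q² ≤ M², let r₊ = M + √(M² − Q² − a²), and define for r > 0: R(r) = √(r² + a² + (2Mr − Q²)·a²/r²), N(r) = √((r² − 2Mr + Q² + a²))/R(r) (taking the positive square root for r > r₊), and ω(r) = a·(2Mr − Q²)/(R(r)²·r²). Let r₀ > r₊ lie in the ergoregion, i.e. N(r₀) < ω(r₀)·R(r₀). Let m > 0, E < 0, and L ∈ ℝ satisfy E − ω(r₀)L ≥ 0, and define Z²(r) = (E − ω(r)L)² − N(r)²·(m² + L²/R(r)²). Then it is not the case that both Z²(r₀) = 0 and (Z²)'(r₀) = 0. -/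

import Mathlib

/-- The function R(r) of the Kerr–Newman metric in the equatorial plane. -/
noncomputable def KN_R (M a Q r : ℝ) : ℝ :=
  Real.sqrt (r^2 + a^2 + (2*M*r - Q^2) * a^2 / r^2)

/-- The lapse function N(r) of the Kerr–Newman metric in the equatorial plane. -/
noncomputable def KN_N (M a Q r : ℝ) : ℝ :=
  Real.sqrt (r^2 - 2*M*r + Q^2 + a^2) / KN_R M a Q r

/-- The frame-dragging function ω(r) of the Kerr–Newman metric in the equatorial plane. -/
noncomputable def KN_ω (M a Q r : ℝ) : ℝ :=
  a * (2*M*r - Q^2) / ((KN_R M a Q r)^2 * r^2)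

/-! Outside the horizon `Z² = 𝓡 / 𝒜`, where `𝓡 = P² - Δ (m² r² + (L - a E)²)` is Carter's radial
potential, `P = E (r² + a²) - a L`, and `𝒜 = (r² + a²)² - a² Δ > 0`; so a circular orbit has
`𝓡(r₀) = 𝓡'(r₀) = 0`. As `𝓡' = 4 E r P - Δ' (m² r² + (L - a E)²) - 2 m² r Δ` with `Δ, Δ' > 0`
outside the horizon, `E < 0` and `𝓡'(r₀) = 0` force `P < 0`. On the other hand
`(E - ω L) 𝒜 = (r² + a²) P + a Δ (L - a E)`, and `𝓡 = 0` gives `Δ (L - a E)² ≤ P²`, so moving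
forward in time with `P < 0` would give `(r² + a²)² P² ≤ a² Δ² (L - a E)² ≤ a² Δ P²`, i.e. `𝒜 ≤ 0`. -/

open Filter Topology

theorem deriv_div_of_eq_zero {𝕜 : Type*} [NontriviallyNormedField 𝕜] {f g : 𝕜 → 𝕜}
    {x : 𝕜} (hf : DifferentiableAt 𝕜 f x) (hg : DifferentiableAt 𝕜 g x) (hfx : f x = 0)
    (hgx : g x ≠ 0) : deriv (fun y => f y / g y) x = deriv f x / g x := by
  refine (hf.hasDerivAt.div hg.hasDerivAt hgx).deriv.trans ?_
  rw [hfx]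
  field_simp
  ring

noncomputable section

def KN_Δ (M a Q r : ℝ) : ℝ := r^2 - 2*M*r + Q^2 + a^2

def KN_A (M a Q r : ℝ) : ℝ := (r^2 + a^2)^2 - a^2 * KN_Δ M a Q r

def KN_P (a E L r : ℝ) : ℝ := E * (r^2 + a^2) - a * L

def KN_radial (M a Q m E L r : ℝ) : ℝ :=
  KN_P a E L r ^ 2 - KN_Δ M a Q r * (m^2 * r^2 + (L - a*E)^2)

def KN_Zsq (M a Q m E L r : ℝ) : ℝ :=
  (E - KN_ω M a Q r * L)^2 - (KN_N M a Q r)^2 * (m^2 + L^2 / (KN_R M a Q r)^2)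

end

section

variable {M a Q m E L r : ℝ}

theorem lt_of_outerHorizon_lt (hr : M + √(M^2 - Q^2 - a^2) < r) : M < r :=
  (le_add_of_nonneg_right (Real.sqrt_nonneg _)).trans_lt hr

theorem sub_KN_Δ : r^2 + a^2 - KN_Δ M a Q r = 2*M*r - Q^2 := by
  unfold KN_Δ
  ring

theorem KN_Δ_pos_of_outerHorizon_lt (hr : M + √(M^2 - Q^2 - a^2) < r) : 0 < KN_Δ M a Q r := by
  have hrM : 0 < r - M := (Real.sqrt_nonneg _).trans_lt (by linarith)
  have := (Real.sqrt_lt' hrM).mp (by linarith)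
  unfold KN_Δ
  nlinarith

theorem KN_A_pos (hM : 0 < M) (hQ : Q^2 ≤ M^2) (hrM : M < r) : 0 < KN_A M a Q r := by
  have hr : 0 < r := hM.trans hrM
  have : 0 ≤ 2*M*r - Q^2 := by nlinarith
  have hA : KN_A M a Q r = r^4 + a^2 * r^2 + (2*M*r - Q^2) * a^2 := by unfold KN_A KN_Δ; ring
  rw [hA]
  positivity

theorem KN_R_sq (hr : r ≠ 0) (hA : 0 ≤ KN_A M a Q r) : KN_R M a Q r ^ 2 = KN_A M a Q r / r^2 := by
  have hinner : r^2 + a^2 + (2*M*r - Q^2) * a^2 / r^2 = KN_A M a Q r / r^2 := by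
    unfold KN_A KN_Δ
    field_simp
    ring
  rw [KN_R, hinner, Real.sq_sqrt (by positivity)]

theorem KN_N_sq (hr : r ≠ 0) (hΔ : 0 ≤ KN_Δ M a Q r) (hA : 0 ≤ KN_A M a Q r) :
    KN_N M a Q r ^ 2 = KN_Δ M a Q r * r^2 / KN_A M a Q r := by
  rw [KN_N, div_pow, KN_R_sq hr hA, div_div_eq_mul_div]
  exact congrArg (· * r^2 / KN_A M a Q r) (Real.sq_sqrt hΔ)

theorem KN_ω_eq (hr : r ≠ 0) (hA : 0 ≤ KN_A M a Q r) :
    KN_ω M a Q r = a * (2*M*r - Q^2) / KN_A M a Q r := by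
  rw [KN_ω, KN_R_sq hr hA, div_mul_cancel₀ _ (pow_ne_zero 2 hr)]

theorem KN_Zsq_eq (hr : r ≠ 0) (hΔ : 0 ≤ KN_Δ M a Q r) (hA : 0 < KN_A M a Q r) :
    KN_Zsq M a Q m E L r = KN_radial M a Q m E L r / KN_A M a Q r := by
  rw [KN_Zsq, KN_ω_eq hr hA.le, KN_N_sq hr hΔ hA.le, KN_R_sq hr hA.le]
  rw [← sub_KN_Δ (a := a), KN_radial, KN_P]
  field_simp
  unfold KN_A
  ring

theorem KN_sub_ω_mul_A (hr : r ≠ 0) (hA : 0 < KN_A M a Q r) :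
    (E - KN_ω M a Q r * L) * KN_A M a Q r
      = (r^2 + a^2) * KN_P a E L r + a * KN_Δ M a Q r * (L - a*E) := by
  rw [KN_ω_eq hr hA.le, ← sub_KN_Δ (a := a), KN_P]
  field_simp
  unfold KN_A
  ring

theorem hasDerivAt_KN_radial :
    HasDerivAt (KN_radial M a Q m E L)
      (2 * KN_P a E L r * (2*E*r)
        - ((2*r - 2*M) * (m^2 * r^2 + (L - a*E)^2) + KN_Δ M a Q r * (2 * m^2 * r))) r := by
  have hsq : HasDerivAt (fun r : ℝ => r^2) (2*r) r := by simpa using hasDerivAt_pow 2 r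
  have hP : HasDerivAt (KN_P a E L) (E * (2*r)) r :=
    ((hsq.add_const (a^2)).const_mul E).sub_const (a*L)
  have hΔ : HasDerivAt (KN_Δ M a Q) (2*r - 2*M) r :=
    (((hsq.sub ((hasDerivAt_id r).const_mul (2*M))).add_const (Q^2)).add_const (a^2)).congr_deriv
      (by rw [mul_one])
  have hq : HasDerivAt (fun r => m^2 * r^2 + (L - a*E)^2) (m^2 * (2*r)) r :=
    (hsq.const_mul (m^2)).add_const _
  refine ((hP.pow 2).sub (hΔ.mul hq)).congr_deriv ?_
  push_cast
  ring

theorem differentiable_KN_A : Differentiable ℝ (KN_A M a Q) := by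
  unfold KN_A KN_Δ
  fun_prop

theorem KN_P_neg_of_deriv_radial_eq_zero (hr : 0 < r) (hrM : M < r) (hm : 0 < m) (hE : E < 0)
    (hΔ : 0 < KN_Δ M a Q r) (hd : deriv (KN_radial M a Q m E L) r = 0) : KN_P a E L r < 0 := by
  rw [hasDerivAt_KN_radial.deriv] at hd
  by_contra! hP
  nlinarith [mul_nonneg (mul_nonneg hP hr.le) (neg_nonneg.mpr hE.le),
    mul_nonneg (sub_nonneg.mpr hrM.le) (add_nonneg (sq_nonneg (m*r)) (sq_nonneg (L - a*E))),
    mul_pos hΔ (mul_pos (pow_pos hm 2) hr)]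

theorem KN_P_nonneg_of_forward (hr : r ≠ 0) (hΔ : 0 < KN_Δ M a Q r) (hA : 0 < KN_A M a Q r)
    (hrad : KN_radial M a Q m E L r = 0) (hX : 0 ≤ E - KN_ω M a Q r * L) : 0 ≤ KN_P a E L r := by
  have hfwd := mul_nonneg hX hA.le
  rw [KN_sub_ω_mul_A hr hA] at hfwd
  by_contra! hP
  set P := KN_P a E L r
  set Δ := KN_Δ M a Q r
  set B := L - a*E
  have hlhs : 0 < (r^2 + a^2) * -P := mul_pos (by positivity) (neg_pos.mpr hP)
  have hB : B ≠ 0 := by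
    rintro hB
    rw [hB] at hfwd
    linarith
  have hsq : ((r^2 + a^2) * -P)^2 ≤ (a * Δ * B)^2 := pow_le_pow_left₀ hlhs.le (by linarith) 2
  have hPB : Δ * B^2 ≤ P^2 := by
    rw [KN_radial] at hrad
    nlinarith [mul_nonneg hΔ.le (sq_nonneg (m*r))]
  have hA' : KN_A M a Q r * (Δ * B^2) ≤ 0 := by
    unfold KN_A
    nlinarith [mul_le_mul_of_nonneg_left hPB (sq_nonneg (r^2 + a^2))]
  exact hA'.not_gt (mul_pos hA (mul_pos hΔ (pow_two_pos_of_ne_zero hB)))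

end

theorem KerrNewman_no_circular_negative_energy_orbit_general
    (M a Q : ℝ) (hM : 0 < M) (h : a^2 + Q^2 ≤ M^2)
    (r₀ : ℝ) (hr : M + Real.sqrt (M^2 - Q^2 - a^2) < r₀)
    (m E L : ℝ) (hm : 0 < m) (hE : E < 0) (hX : 0 ≤ E - KN_ω M a Q r₀ * L) :
    ¬ ((E - KN_ω M a Q r₀ * L)^2
          - (KN_N M a Q r₀)^2 * (m^2 + L^2 / (KN_R M a Q r₀)^2) = 0 ∧
       deriv (fun r => (E - KN_ω M a Q r * L)^2
          - (KN_N M a Q r)^2 * (m^2 + L^2 / (KN_R M a Q r)^2)) r₀ = 0) := by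
  rintro (⟨hZ, hdZ⟩ : KN_Zsq M a Q m E L r₀ = 0 ∧ deriv (KN_Zsq M a Q m E L) r₀ = 0)
  have hQ : Q^2 ≤ M^2 := by linarith [sq_nonneg a]
  have hZ_eq : KN_Zsq M a Q m E L =ᶠ[𝓝 r₀] fun r => KN_radial M a Q m E L r / KN_A M a Q r := by
    filter_upwards [eventually_gt_nhds hr] with r hr
    have hrM := lt_of_outerHorizon_lt hr
    exact KN_Zsq_eq (hM.trans hrM).ne' (KN_Δ_pos_of_outerHorizon_lt hr).le (KN_A_pos hM hQ hrM)
  have hrM := lt_of_outerHorizon_lt hr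
  have hr₀ : 0 < r₀ := hM.trans hrM
  have hΔ := KN_Δ_pos_of_outerHorizon_lt hr
  have hA : 0 < KN_A M a Q r₀ := KN_A_pos hM hQ hrM
  have hrad : KN_radial M a Q m E L r₀ = 0 := by
    rw [hZ_eq.eq_of_nhds, div_eq_zero_iff] at hZ
    exact hZ.resolve_right hA.ne'
  have hdrad : deriv (KN_radial M a Q m E L) r₀ = 0 := by
    rw [hZ_eq.deriv_eq, deriv_div_of_eq_zero hasDerivAt_KN_radial.differentiableAt
      differentiable_KN_A.differentiableAt hrad hA.ne', div_eq_zero_iff] at hdZ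
    exact hdZ.resolve_right hA.ne'
  exact (KN_P_neg_of_deriv_radial_eq_zero hr₀ hrM hm hE hΔ hdrad).not_ge
    (KN_P_nonneg_of_forward hr₀.ne' hΔ hA hrad hX)

/-- No circular negative-energy orbits in the ergoregion of the Kerr–Newman metric. -/
theorem KerrNewman_no_circular_negative_energy_orbit
    (M a Q : ℝ) (hM : 0 < M) (ha : 0 < a) (h : a^2 + Q^2 ≤ M^2)
    (r₀ : ℝ) (hr : M + Real.sqrt (M^2 - Q^2 - a^2) < r₀)
    (hergo : KN_N M a Q r₀ < KN_ω M a Q r₀ * KN_R M a Q r₀)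
    (m E L : ℝ) (hm : 0 < m) (hE : E < 0) (hX : 0 ≤ E - KN_ω M a Q r₀ * L) :
    ¬ ((E - KN_ω M a Q r₀ * L)^2
          - (KN_N M a Q r₀)^2 * (m^2 + L^2 / (KN_R M a Q r₀)^2) = 0 ∧
       deriv (fun r => (E - KN_ω M a Q r * L)^2
          - (KN_N M a Q r)^2 * (m^2 + L^2 / (KN_R M a Q r)^2)) r₀ = 0) :=
  KerrNewman_no_circular_negative_energy_orbit_general M a Q hM h r₀ hr m E L hm hE hX
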